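/- arXiv:1508.00397 — 2 statements merged into one kernel-verified Lean document; each statement's English description precedes it below -/
import Mathlib

section
/- Let m = 6j−1 be prime. Then m divides p(n,3) if and only if n is congruent modulo 6m to one of ±0, ±1, ±2, ±(2m−2), ±(2m+1). -/
/-!
Removing one from each part, or the smallest part when it equals `1`, gives
`p(n + 3, 3) = p(n, 3) + ⌊(n + 2) / 2⌋`, whence `p(n, 3) = ⌊(n² + 6) / 12⌋`. So if `n ≡ ±r (mod 6)`
with `r ≤ 2`, then `12 p(n, 3) = n² - r²` and a prime `m ≥ 5` divides `p(n, 3)` iff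
`n ≡ ±r (mod m)`; if `n ≡ 3 (mod 6)`, then `12 p(n, 3) = n² + 3`, and `-3` is not a square modulo
a prime `m ≡ 5 (mod 6)`. By the Chinese remainder theorem the residues `±0, ±1, ±2, ±(2m - 2)`,
`±(2m + 1)` modulo `6m` are exactly those that are `±r` modulo `6` and `±r` modulo `m` for some
`r ≤ 2`, with independent signs.
-/

open Finset

/-- The set of partitions of `n` into exactly 3 positive parts, as triples
`(a, b, c)` with `a ≥ b ≥ c ≥ 1` and `a + b + c = n`. -/
def P3 (n : ℕ) : Finset (ℕ × ℕ × ℕ) :=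
  (Finset.range (n+1) ×ˢ Finset.range (n+1) ×ˢ Finset.range (n+1)).filter
    (fun t => t.2.1 ≤ t.1 ∧ t.2.2 ≤ t.2.1 ∧ 1 ≤ t.2.2 ∧ t.1 + t.2.1 + t.2.2 = n)

/-- `p3 n` is the number of partitions of `n` into exactly 3 positive parts. -/
def p3 (n : ℕ) : ℕ := (P3 n).card

@[simp]
lemma mem_P3 {n a b c : ℕ} : (a, b, c) ∈ P3 n ↔ b ≤ a ∧ c ≤ b ∧ 1 ≤ c ∧ a + b + c = n := by
  simp only [P3, mem_filter, mem_product, mem_range]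
  omega

lemma card_P3_filter_smallest_eq_one (n : ℕ) :
    #{t ∈ P3 (n + 3) | t.2.2 = 1} = (n + 2) / 2 := by
  rw [show (n + 2) / 2 = #(Icc 1 ((n + 2) / 2)) by simp]
  refine card_nbij' (fun t => t.2.1) (fun b => (n + 2 - b, b, 1)) ?_ ?_ ?_ ?_ <;>
    simp only [Set.MapsTo, Set.LeftInvOn, Set.RightInvOn, Prod.forall, mem_coe, mem_filter, mem_Icc,
      mem_P3, Prod.mk.injEq, and_true, true_and, and_imp, implies_true] <;> intros <;> omega

lemma card_P3_filter_smallest_ne_one (n : ℕ) :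
    #{t ∈ P3 (n + 3) | t.2.2 ≠ 1} = p3 n := by
  refine card_nbij' (fun t => (t.1 - 1, t.2.1 - 1, t.2.2 - 1))
    (fun t => (t.1 + 1, t.2.1 + 1, t.2.2 + 1)) ?_ ?_ ?_ ?_ <;>
    simp only [Set.MapsTo, Set.LeftInvOn, Set.RightInvOn, Prod.forall, mem_coe, mem_filter,
      mem_P3, Prod.mk.injEq, and_imp] <;> intros <;> omega

lemma p3_add_three (n : ℕ) : p3 (n + 3) = p3 n + (n + 2) / 2 := by
  rw [p3, ← card_filter_add_card_filter_not (fun t => t.2.2 = 1),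
    card_P3_filter_smallest_eq_one, card_P3_filter_smallest_ne_one, add_comm]

lemma p3_eq (n : ℕ) : p3 n = (n ^ 2 + 6) / 12 := by
  induction n using Nat.strong_induction_on with
  | _ n ih =>
    match n with
    | 0 | 1 | 2 => decide
    | k + 3 =>
      rw [p3_add_three, ih k (by omega)]
      obtain ⟨q, s, hs, rfl⟩ : ∃ q s, s < 6 ∧ k = s + 6 * q :=
        ⟨k / 6, k % 6, k.mod_lt (by norm_num), (k.mod_add_div 6).symm⟩
      have h₁ : (s + 6 * q + 3) ^ 2 = (s + 6 * q) ^ 2 + 6 * (s + 6 * q) + 9 := by ring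
      have h₂ : (s + 6 * q) ^ 2 = s ^ 2 + 12 * (3 * q ^ 2 + s * q) := by ring
      rw [h₁, h₂]
      interval_cases s <;> omega

lemma twelve_mul_p3_add (n : ℕ) : 12 * p3 n + ((n % 6) ^ 2 + 6) % 12 = n ^ 2 + 6 := by
  have h : (n ^ 2 + 6) % 12 = ((n % 6) ^ 2 + 6) % 12 := by
    conv_lhs => rw [← n.mod_add_div 6]
    rw [show (n % 6 + 6 * (n / 6)) ^ 2 + 6
        = (n % 6) ^ 2 + 6 + 12 * (3 * (n / 6) ^ 2 + n % 6 * (n / 6)) by ring,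
      Nat.add_mul_mod_self_left]
  rw [p3_eq, ← h, Nat.div_add_mod]

lemma dvd_p3_iff_sq_eq {p : ℕ} (hp : Nat.Coprime 12 p) (n : ℕ) :
    p ∣ p3 n ↔ (n : ZMod p) ^ 2 = (((n % 6) ^ 2 + 6) % 12 : ℕ) - 6 := by
  have h := congrArg (Nat.cast : ℕ → ZMod p) (twelve_mul_p3_add n)
  push_cast at h
  rw [← ZMod.natCast_eq_zero_iff, ← (ZMod.unitOfCoprime 12 hp).isUnit.mul_right_eq_zero,
    ZMod.coe_unitOfCoprime, Nat.cast_ofNat]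
  constructor <;> intro h'
  · linear_combination h' - h
  · linear_combination h + h'

theorem ZMod.sq_ne_neg_three {p : ℕ} [Fact p.Prime] (hp : p % 6 = 5) (a : ZMod p) :
    a ^ 2 ≠ -3 := by
  intro ha
  have h2 : (2 : ZMod p) ≠ 0 := by
    intro h
    have := Nat.le_of_dvd two_pos ((ZMod.natCast_eq_zero_iff 2 p).1 (by exact_mod_cast h))
    omega
  -- `(a - 1) / 2` is a primitive cube root of unity, so `3 ∣ p - 1`
  obtain ⟨ω, rfl⟩ : ∃ ω : ZMod p, a = 2 * ω + 1 := ⟨(a - 1) / 2, by field_simp; ring⟩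
  have hω : ω ^ 2 + ω + 1 = 0 := by
    have : (2 : ZMod p) ^ 2 * (ω ^ 2 + ω + 1) = 0 := by linear_combination ha
    simpa [h2] using this
  have hω3 : ω ^ 3 = 1 := by linear_combination (ω - 1) * hω
  have hω1 : ω ≠ 1 := by
    intro h
    have := Nat.le_of_dvd three_pos ((ZMod.natCast_eq_zero_iff 3 p).1 (by
      rw [← hω, h]; norm_num))
    omega
  have hω0 : ω ≠ 0 := by rintro rfl; simp at hω3
  have := orderOf_eq_prime hω3 hω1 ▸ ZMod.orderOf_dvd_card_sub_one hω0
  omega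

theorem prime_dvd_p3_iff {p : ℕ} [Fact p.Prime] (hp : p % 6 = 5) (n : ℕ) :
    p ∣ p3 n ↔ ∃ r ∈ ({0, 1, 2} : Finset ℕ), ((n : ZMod 6) = r ∨ (n : ZMod 6) = -r) ∧
      ((n : ZMod p) = r ∨ (n : ZMod p) = -r) := by
  have hp12 : Nat.Coprime 12 p := by
    rw [Nat.Coprime, Nat.gcd_rec]
    obtain h | h : p % 12 = 5 ∨ p % 12 = 11 := by omega
    all_goals rw [h]; rfl
  rw [dvd_p3_iff_sq_eq hp12, ← ZMod.natCast_mod n 6]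
  have : n % 6 < 6 := n.mod_lt (by norm_num)
  interval_cases n % 6 <;> simp +decide <;> norm_num
  -- left: `¬ n ^ 2 = -3` for the residue `3`, and `n ^ 2 = r ^ 2 ↔ n = r ∨ n = -r` otherwise
  all_goals first
    | exact ZMod.sq_ne_neg_three hp _
    | rw [← sq_eq_sq_iff_eq_or_eq_neg]; norm_num

theorem exists_eq_pm_iff {m : ℕ} (hm : m % 6 = 5) (n : ℕ) :
    (∃ x : ZMod (6 * m), (x = 0 ∨ x = 1 ∨ x = 2 ∨ x = 2 * (m : ZMod (6 * m)) - 2 ∨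
        x = 2 * (m : ZMod (6 * m)) + 1) ∧ ((n : ZMod (6 * m)) = x ∨ (n : ZMod (6 * m)) = -x)) ↔
      ∃ r ∈ ({0, 1, 2} : Finset ℕ), ((n : ZMod 6) = r ∨ (n : ZMod 6) = -r) ∧
        ((n : ZMod m) = r ∨ (n : ZMod m) = -r) := by
  have hcop : Nat.Coprime 6 m := by rw [Nat.Coprime, Nat.gcd_rec, hm]; rfl
  have hm6 : (m : ZMod 6) = -1 := by rw [← ZMod.natCast_mod, hm]; rfl
  set φ := ZMod.chineseRemainder hcop
  have crt (x : ZMod (6 * m)) :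
      (n : ZMod (6 * m)) = x ↔ (n : ZMod 6) = (φ x).1 ∧ (n : ZMod m) = (φ x).2 := by
    rw [← φ.injective.eq_iff, map_natCast, Prod.ext_iff]; rfl
  -- the images of `2m - 2` and `2m + 1` in `ZMod 6 × ZMod m` are `(2, -2)` and `(-1, 1)`
  simp [crt, hm6, map_ofNat]
  grind

theorem stmt4 (j m : ℕ) (hj : m = 6 * j - 1) (hm : m.Prime) (n : ℕ) :
    m ∣ p3 n ↔
      ∃ x : ZMod (6 * m),
        (x = 0 ∨ x = 1 ∨ x = 2 ∨ x = 2 * (m : ZMod (6 * m)) - 2 ∨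
          x = 2 * (m : ZMod (6 * m)) + 1) ∧
        ((n : ZMod (6 * m)) = x ∨ (n : ZMod (6 * m)) = -x) := by
  have : Fact m.Prime := ⟨hm⟩
  have hm6 : m % 6 = 5 := by have := hm.two_le; omega
  rw [prime_dvd_p3_iff hm6, exists_eq_pm_iff hm6]
end

section
/- Let m be a prime with m ≡ 5 (mod 6). Then for every nonnegative integer k, p(6k+3,3) is not divisible by m. -/
open Finset

lemma p3_eq_sum (n : ℕ) : p3 n = ∑ b ∈ range (n+1), min b (n - 2*b) := by
  unfold p3 P3
  rw [Finset.card_filter]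
  simp only [Finset.sum_product]
  rw [Finset.sum_comm]
  rw [show (∑ b ∈ range (n+1), ∑ a ∈ range (n+1), ∑ c ∈ range (n+1),
      (if b ≤ a ∧ c ≤ b ∧ 1 ≤ c ∧ a + b + c = n then 1 else 0)) =
      ∑ b ∈ range (n+1), ∑ c ∈ range (n+1), ∑ a ∈ range (n+1),
      (if b ≤ a ∧ c ≤ b ∧ 1 ≤ c ∧ a + b + c = n then 1 else 0) from
    Finset.sum_congr rfl fun b _ => Finset.sum_comm]
  refine Finset.sum_congr rfl fun b hb => ?_
  have hb' : b ≤ n := by simpa using Nat.lt_succ_iff.mp (Finset.mem_range.mp hb)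
  have step1 : ∀ c, (∑ a ∈ range (n+1),
      (if b ≤ a ∧ c ≤ b ∧ 1 ≤ c ∧ a + b + c = n then 1 else 0)) =
      (if c ≤ b ∧ 1 ≤ c ∧ 2*b + c ≤ n then 1 else 0) := by
    intro c
    rw [← Finset.card_filter]
    split_ifs with hq
    · rw [show (range (n+1)).filter
          (fun a => b ≤ a ∧ c ≤ b ∧ 1 ≤ c ∧ a + b + c = n) = {n - b - c} by
        ext a
        simp only [Finset.mem_filter, Finset.mem_range, Finset.mem_singleton]
        omega]
      simp
    · rw [show (range (n+1)).filter
          (fun a => b ≤ a ∧ c ≤ b ∧ 1 ≤ c ∧ a + b + c = n) = ∅ by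
        ext a
        simp only [Finset.mem_filter, Finset.mem_range, Finset.notMem_empty,
          iff_false]
        omega]
      simp
  simp only [step1]
  rw [← Finset.card_filter]
  rw [show (range (n+1)).filter (fun c => c ≤ b ∧ 1 ≤ c ∧ 2*b + c ≤ n) =
      Finset.Icc 1 (min b (n - 2*b)) by
    ext c
    simp only [Finset.mem_filter, Finset.mem_range, Finset.mem_Icc, le_min_iff,
      Nat.lt_succ_iff]
    omega]
  rw [Nat.card_Icc]
  omega

lemma sum_odds (n : ℕ) : ∑ i ∈ range n, (2*i+1) = n^2 := by
  induction n with
  | zero => simp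
  | succ n ih => rw [Finset.sum_range_succ, ih]; ring

lemma p3_closed (k : ℕ) : p3 (6*k+3) = 3*k^2 + 3*k + 1 := by
  rw [p3_eq_sum]
  rw [show 6*k+3+1 = (2*k+2) + (4*k+2) by ring, Finset.sum_range_add]
  have h1 : ∑ b ∈ range (2*k+2), min b (6*k+3 - 2*b) = ∑ b ∈ range (2*k+2), b :=
    Finset.sum_congr rfl fun b hb => by
      have := Finset.mem_range.mp hb; omega
  have h2 : ∑ b ∈ range (2*k+2), b = 2*k^2 + 3*k + 1 := by
    have h := Finset.sum_range_id_mul_two (2*k+2)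
    have e : (2*k+2) * (2*k+2-1) = (2*k^2+3*k+1) * 2 := by
      rw [show (2*k+2) - 1 = 2*k+1 by omega]; ring
    rw [e] at h
    exact Nat.eq_of_mul_eq_mul_right (by norm_num) h
  have h3 : ∑ i ∈ range (4*k+2), min (2*k+2+i) (6*k+3 - 2*(2*k+2+i)) =
      ∑ i ∈ range (4*k+2), (2*k - 1 - 2*i) :=
    Finset.sum_congr rfl fun i hi => by
      have := Finset.mem_range.mp hi; omega
  have h5 : ∑ i ∈ range k, (2*k - 1 - 2*i) = k^2 := by
    rw [← Finset.sum_range_reflect]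
    rw [← sum_odds k]
    exact Finset.sum_congr rfl fun i hi => by
      have := Finset.mem_range.mp hi; omega
  have hS2 : ∑ i ∈ range (4*k+2), (2*k - 1 - 2*i) = k^2 := by
    rw [show (4*k+2 : ℕ) = k + (3*k+2) by ring, Finset.sum_range_add]
    have h4 : ∑ i ∈ range (3*k+2), (2*k - 1 - 2*(k+i)) = 0 :=
      Finset.sum_eq_zero fun i _ => by omega
    rw [h4, h5]
    ring
  rw [h1, h2, h3, hS2]
  ring

theorem stmt6 (m : ℕ) (hm : m.Prime) (h : m % 6 = 5) (k : ℕ) :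
    ¬ m ∣ p3 (6 * k + 3) := by
  rw [p3_closed]
  intro hdvd
  haveI : Fact m.Prime := ⟨hm⟩
  have hc : ((3*k^2 + 3*k + 1 : ℕ) : ZMod m) = 0 :=
    (ZMod.natCast_eq_zero_iff _ _).mpr hdvd
  push_cast at hc
  set ω : ZMod m := 3*(k : ZMod m) + 1 with hω
  have hroot : ω^2 + ω + 1 = 0 := by
    rw [hω]; linear_combination 3 * hc
  have hω0 : ω ≠ 0 := by
    intro h0
    rw [h0] at hroot
    simp at hroot
  have hω1 : ω ≠ 1 := by
    intro h1
    rw [h1] at hroot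
    have h3 : ((3 : ℕ) : ZMod m) = 0 := by push_cast; linear_combination hroot
    have h3' := (ZMod.natCast_eq_zero_iff 3 m).mp h3
    have := Nat.le_of_dvd (by norm_num) h3'
    omega
  have hcube : ω^3 = 1 := by linear_combination (ω - 1) * hroot
  have hord : orderOf ω = 3 := orderOf_eq_prime hcube hω1
  have hfer : ω^(m-1) = 1 := ZMod.pow_card_sub_one_eq_one hω0
  have hdvd3 : 3 ∣ m - 1 := hord ▸ orderOf_dvd_of_pow_eq_one hfer
  obtain ⟨t, ht⟩ := hdvd3
  omega
end
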